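/- Let p be a prime, L a complete discretely valued field of characteristic 0 with residue characteristic p, μ_{p^n} a compatible system of primitive p^n-th roots of unity in an algebraic closure (μ_{p^{n+1}}^p = μ_{p^n}). Then for all m < n, (μ_{p^n} − 1)^{p^m} ≡ μ_{p^{n−m}} − 1 modulo the ideal generated by ϖ = μ_p − 1 in the ring of integers of L(μ_{p^n}). -/

import Mathlib

/-- Let `O` be the ring of integers of `L(μ_{p^n})` (abstracted: a characteristic-zero
domain) containing a compatible system `ζ j` of primitive `p^j`-th roots of unity
(`ζ (j+1) ^ p = ζ j`). Then for `m < n`,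
`(μ_{p^n} − 1)^{p^m} ≡ μ_{p^{n−m}} − 1` modulo the ideal generated by `ϖ = μ_p − 1`. -/
theorem stmt17 (O : Type*) [CommRing O] [IsDomain O] [CharZero O]
    (p : ℕ) (hp : p.Prime) (ζ : ℕ → O)
    (hζ : ∀ j : ℕ, IsPrimitiveRoot (ζ j) (p ^ j))
    (hcompat : ∀ j : ℕ, (ζ (j + 1)) ^ p = ζ j)
    (m n : ℕ) (hmn : m < n) :
    (ζ n - 1) ^ (p ^ m) - (ζ (n - m) - 1) ∈ Ideal.span {ζ 1 - 1} := by
  -- p is in the ideal (ζ 1 - 1)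
  have hpI : (p : O) ∈ Ideal.span {ζ 1 - 1} := by
    obtain ⟨z, -, hz⟩ := (hζ 1).self_sub_one_pow_dvd_order
      (k := 1) (by simpa using hp.one_lt)
    simp only [pow_one] at hz
    rw [Ideal.mem_span_singleton]
    exact ⟨z, by rw [mul_comm]; exact_mod_cast hz⟩
  -- freshman's dream mod (ζ 1 - 1)
  have hfrob : ∀ x : O, (x - 1) ^ p - (x ^ p - 1) ∈ Ideal.span {ζ 1 - 1} := by
    intro x
    obtain ⟨r, hr⟩ : ∃ r : O, (x + -1) ^ p = x ^ p + (-1) ^ p + (p : O) * r := by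
      obtain ⟨r, hr⟩ := exists_add_pow_prime_eq hp x (-1)
      exact ⟨x * -1 * r, by rw [hr]; ring⟩
    have key : (x - 1) ^ p - (x ^ p - 1) = ((-1 : O) ^ p + 1) + p * r := by
      have : x - 1 = x + (-1) := by ring
      rw [this, hr]; ring
    rcases hp.eq_two_or_odd' with h2 | hodd
    · subst h2
      rw [key]
      have : ((-1 : O) ^ 2 + 1) + ((2 : ℕ) : O) * r = ((2 : ℕ) : O) * (1 + r) := by
        push_cast; ring
      rw [this]
      exact Ideal.mul_mem_right _ _ hpI
    · rw [key, hodd.neg_one_pow]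
      have : ((-1 : O) + 1) + p * r = p * r := by ring
      rw [this]
      exact Ideal.mul_mem_right _ _ hpI
  revert hmn
  induction m with
  | zero => intro _; simp
  | succ m ih =>
    intro hmn
    have hm : m < n := Nat.lt_of_succ_lt hmn
    have ih' := ih hm
    set a := (ζ n - 1) ^ (p ^ m) with ha
    set b := ζ (n - m) - 1 with hb
    -- a^p - b^p ∈ I
    have h1 : a ^ p - b ^ p ∈ Ideal.span {ζ 1 - 1} := by
      obtain ⟨c, hc⟩ := sub_dvd_pow_sub_pow a b p
      rw [hc]
      exact Ideal.mul_mem_right _ _ ih'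
    -- b^p - (ζ(n-m)^p - 1) ∈ I
    have h2 := hfrob (ζ (n - m))
    -- ζ(n-m)^p = ζ(n-(m+1))
    have h3 : (ζ (n - m)) ^ p = ζ (n - (m + 1)) := by
      have h4 : n - (m + 1) + 1 = n - m := by omega
      calc (ζ (n - m)) ^ p = (ζ (n - (m + 1) + 1)) ^ p := by rw [h4]
        _ = ζ (n - (m + 1)) := hcompat _
    have key : (ζ n - 1) ^ (p ^ (m + 1)) - (ζ (n - (m + 1)) - 1)
        = (a ^ p - b ^ p) + (b ^ p - ((ζ (n - m)) ^ p - 1)) := by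
      rw [h3, ha, ← pow_mul, ← pow_succ]
      ring
    rw [key]
    exact Ideal.add_mem _ h1 h2
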